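/- Combinatorial wall-crossing formula: let τ_1 and τ_2 be adjacent Φ-topes with τ_1 ⊆ c(Φ), let H be their common wall, and let A be the set of i such that φ_i lies in the open side of H containing τ_1. Then X(Φ,τ_1) = X(Φ,τ_2) − (−1)^{|A|} · Flip_A X(Φ_flip^A, τ_2) in ℤ[p_1,…,p_N,q_1,…,q_N]. -/

import Mathlib

open scoped Pointwise
open Classical MvPolynomial

noncomputable section

namespace AC

section Defs

variable {E : Type*} [AddCommGroup E] [Module ℝ E]
variable {ι : Type*} [Fintype ι] [DecidableEq ι]

/-- Characteristic function of a set, with values in `ℝ`. -/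
def charFn {α : Type*} (s : Set α) (x : α) : ℝ := if x ∈ s then 1 else 0

/-- The cone of nonnegative linear combinations of `{Ψ i : i ∈ I}`. -/
def coneOf (Ψ : ι → E) (I : Set ι) : Set E :=
  {v | ∃ c : ι → ℝ, (∀ i, 0 ≤ c i) ∧ (∀ i, i ∉ I → c i = 0) ∧ v = ∑ i, c i • Ψ i}

/-- The cone of nonnegative linear combinations of all the `Ψ i`. -/
def fullCone (Ψ : ι → E) : Set E := coneOf Ψ Set.univ

/-- A cone is salient if it contains no line, i.e. `v, -v ∈ C → v = 0`. -/
def Salient (C : Set E) : Prop := ∀ v ∈ C, -v ∈ C → v = 0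

/-- A wall: a hyperplane spanned by `dim E - 1` linearly independent members of `Ψ`. -/
def IsWall (Ψ : ι → E) (H : Submodule ℝ E) : Prop :=
  ∃ S : Finset ι, S.card + 1 = Module.finrank ℝ E ∧
    LinearIndependent ℝ (fun i : {x // x ∈ S} => Ψ i.1) ∧
    H = Submodule.span ℝ (Ψ '' ↑S)

/-- An element is regular when it lies on no wall. -/
def IsRegular (Ψ : ι → E) (μ : E) : Prop :=
  ∀ H : Submodule ℝ E, IsWall Ψ H → μ ∉ H

/-- `G(Ψ,τ)`: generating subsets whose cone contains `τ`. -/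
def Gens (Ψ : ι → E) (τ : Set E) : Set (Finset ι) :=
  {I | Submodule.span ℝ (Ψ '' ↑I) = ⊤ ∧ τ ⊆ coneOf Ψ ↑I}

/-- `I` is basic when `{Ψ i : i ∈ I}` is a basis of `E`. -/
def IsBasic (Ψ : ι → E) (I : Finset ι) : Prop :=
  LinearIndependent ℝ (fun i : {x // x ∈ I} => Ψ i.1) ∧
    Submodule.span ℝ (Ψ '' ↑I) = ⊤

/-- `B(Ψ,τ)`: basic subsets whose cone contains `τ`. -/
def Bases (Ψ : ι → E) (τ : Set E) : Set (Finset ι) :=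
  {I | IsBasic Ψ I ∧ τ ⊆ coneOf Ψ ↑I}

/-- The combinatorial Brianchon-Gram polynomial `X(Ψ,τ)`; the variable `Sum.inl i`
plays the role of `p i` and `Sum.inr i` plays the role of `q i`. -/
def BGpoly (Ψ : ι → E) (τ : Set E) : MvPolynomial (ι ⊕ ι) ℤ :=
  ∑ I : Finset ι,
    if I ∈ Gens Ψ τ then
      (-1 : MvPolynomial (ι ⊕ ι) ℤ) ^ (I.card - Module.finrank ℝ E) *
        ((∏ j ∈ Iᶜ, X (Sum.inl j)) * ∏ i ∈ I, (X (Sum.inl i) + X (Sum.inr i)))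
    else 0

/-- The geometric Brianchon-Gram function `X_geom(Ψ,τ)` on `ℝ^ι`. -/
def XGeom (Ψ : ι → E) (τ : Set E) (x : ι → ℝ) : ℝ :=
  ∑ I : Finset ι,
    if I ∈ Gens Ψ τ then
      (-1 : ℝ) ^ (I.card - Module.finrank ℝ E) *
        ∏ j ∈ Iᶜ, (if 0 ≤ x j then (1 : ℝ) else 0)
    else 0

/-- The affine subspace `V(Ψ,λ)`. -/
def affSlice (Ψ : ι → E) (lam : E) : Set (ι → ℝ) := {x | ∑ i, x i • Ψ i = lam}

/-- The partition polytope `p(Ψ,λ)`. -/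
def partPoly (Ψ : ι → E) (lam : E) : Set (ι → ℝ) :=
  {x | (∀ i, 0 ≤ x i) ∧ ∑ i, x i • Ψ i = lam}

/-- The semi-closed quadrant `Q_neg^B`. -/
def Qneg (B : Finset ι) : Set (ι → ℝ) :=
  {x | (∀ i ∈ B, x i < 0) ∧ ∀ i ∉ B, 0 ≤ x i}

/-- The flipped sequence `Ψ_flip^B`. -/
def flipSeq (Ψ : ι → E) (B : Finset ι) : ι → E := fun i => if i ∈ B then -Ψ i else Ψ i

/-- The zonotope `b(Ψ)`. -/
def zonotope (Ψ : ι → E) : Set E :=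
  {v | ∃ t : ι → ℝ, (∀ i, 0 ≤ t i ∧ t i ≤ 1) ∧ v = ∑ i, t i • Ψ i}

/-- `x ∈ ℝ^ι` is a lattice point when all its coordinates are integers. -/
def isLatticePt (x : ι → ℝ) : Prop := ∀ i, ∃ n : ℤ, x i = (n : ℝ)

/-- `v` lies in the open side of the hyperplane `H` containing `τ`. -/
def InOpenSideOf (H : Submodule ℝ E) (τ : Set E) (v : E) : Prop :=
  ∃ ξ : E →ₗ[ℝ] ℝ, (∀ h ∈ H, ξ h = 0) ∧ (∀ μ ∈ τ, 0 < ξ μ) ∧ 0 < ξ v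

/-- The change of variables exchanging `p i` and `q i` for `i ∈ A`. -/
def flipVar (A : Finset ι) : ι ⊕ ι → ι ⊕ ι
  | Sum.inl i => if i ∈ A then Sum.inr i else Sum.inl i
  | Sum.inr i => if i ∈ A then Sum.inl i else Sum.inr i

/-- The ring map `Flip_A`, exchanging `p i` and `q i` for `i ∈ A`. -/
def FlipPoly (A : Finset ι) (P : MvPolynomial (ι ⊕ ι) ℤ) : MvPolynomial (ι ⊕ ι) ℤ :=
  MvPolynomial.rename (flipVar A) P

/-- Value substituted for the variable `p i` in the substitution `Geom_A`. -/
def geomValA (A : Finset ι) (x : ι → ℝ) : ι → ℝ := fun i =>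
  if i ∈ A then (if 0 < x i then 1 else 0) else (if 0 ≤ x i then 1 else 0)

/-- The substitution `Geom_A`: substitute `1 - p i` for `q i`, then `[x i ≥ 0]`
for `p i` if `i ∉ A`, and `[x i > 0]` for `p i` if `i ∈ A`. -/
def GeomA (A : Finset ι) (P : MvPolynomial (ι ⊕ ι) ℤ) (x : ι → ℝ) : ℝ :=
  MvPolynomial.aeval (Sum.elim (geomValA A x) (fun i => 1 - geomValA A x i)) P

/-- The substitution `Geom`: `[x i ≥ 0]` for `p i`, `[x i < 0]` for `q i`. -/
def Geom (P : MvPolynomial (ι ⊕ ι) ℤ) (x : ι → ℝ) : ℝ := GeomA ∅ P x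

/-- The semi-closed flipped partition polytope `p_flip(Ψ,A,λ)`. -/
def pflip (Ψ : ι → E) (A : Finset ι) (lam : E) : Set (ι → ℝ) :=
  {x | (∑ i, x i • Ψ i = lam) ∧ (∀ i ∈ A, x i < 0) ∧ ∀ i ∉ A, 0 ≤ x i}

/-- The linear map `x ↦ ∑ i, x i • Ψ i`. -/
def Mmap (Ψ : ι → E) : (ι → ℝ) →ₗ[ℝ] E where
  toFun x := ∑ i, x i • Ψ i
  map_add' x y := by simp [add_smul, Finset.sum_add_distrib]
  map_smul' c x := by simp [smul_smul, Finset.smul_sum]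

/-- A polynomial function on a finite-dimensional real vector space. -/
def IsPolynomialFun {W : Type*} [AddCommGroup W] [Module ℝ W] (f : W → ℝ) : Prop :=
  ∃ (n : ℕ) (b : Module.Basis (Fin n) ℝ W) (p : MvPolynomial (Fin n) ℝ),
    ∀ v, f v = MvPolynomial.eval (fun i => b.repr v i) p

/-- `Λ` is a (full) lattice in `W`: the ℤ-span of some ℝ-basis. -/
def IsLattice {W : Type*} [AddCommGroup W] [Module ℝ W] (Λ : AddSubgroup W) : Prop :=
  ∃ b : Module.Basis (Fin (Module.finrank ℝ W)) ℝ W,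
    ∀ v, v ∈ Λ ↔ ∀ i, ∃ n : ℤ, b.repr v i = (n : ℝ)

/-- Quasi-polynomial function on the lattice `Λ`: polynomial on each coset of
a finite-index sublattice (here `D • Λ`). -/
def IsQuasiPolynomialOn {W : Type*} [AddCommGroup W] [Module ℝ W]
    (Λ : AddSubgroup W) (f : W → ℝ) : Prop :=
  ∃ D : ℕ, 0 < D ∧ ∀ lam₀ ∈ Λ, ∃ P : W → ℝ, IsPolynomialFun P ∧
    ∀ lam' ∈ Λ, f (lam₀ + D • lam') = P (lam₀ + D • lam')

end Defs

section Topes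

variable {E : Type*} [AddCommGroup E] [Module ℝ E] [TopologicalSpace E]
variable {ι : Type*} [Fintype ι]

/-- A tope: a connected component of the set of regular elements. -/
def IsTope (Ψ : ι → E) (τ : Set E) : Prop :=
  ∃ μ, IsRegular Ψ μ ∧ τ = connectedComponentIn {x | IsRegular Ψ x} μ

/-- Two topes are adjacent along the wall `H` when the intersection of their
closures is contained in `H` and spans `H`. -/
def Adjacent (Ψ : ι → E) (τ₁ τ₂ : Set E) (H : Submodule ℝ E) : Prop :=
  IsTope Ψ τ₁ ∧ IsTope Ψ τ₂ ∧ τ₁ ≠ τ₂ ∧ IsWall Ψ H ∧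
    closure τ₁ ∩ closure τ₂ ⊆ (H : Set E) ∧
    Submodule.span ℝ (closure τ₁ ∩ closure τ₂) = H

end Topes

/-!
Let `ξ` be a functional with kernel the common wall `H`, positive on `τ₁`, and `μ` a point of the
common face `closure τ₁ ∩ closure τ₂` on no other wall (the face is convex and spans `H`). Near `μ`
the topes `τ₁` and `τ₂` are the two sides `ξ > 0` and `ξ < 0`; and a tope meeting a cone generated
by `±Φ` lies in it, as regular points of such a cone are interior and the cone is closed. Hence
for `Ψ = ±Φ`, `I ∈ G(Ψ,τ₁)` iff `μ` lies in the cone of `Ψ_I` and some `Ψ_i`, `i ∈ I`, has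
`ξ > 0` (for `τ₂`: `ξ < 0`). Expanding `q_i = (p_i + q_i) - p_i`, the formula becomes an identity
between coefficients, where `Flip_A` contributes an alternating sum over `J \ A ⊆ I ⊆ J`. As
`μ ∈ ker ξ`, every cone condition in that sum says that `μ` lies in the face `ξ = 0` of the cone
of `Φ_J`, and the sum collapses by inclusion–exclusion.
-/

section Cones

variable {E : Type*} [AddCommGroup E] [Module ℝ E] {ι : Type*} {Ψ : ι → E}

/-- Conic Carathéodory theorem. -/
lemma exists_linearIndepOn_sum_eq (J : Finset ι) (c : ι → ℝ) (hc : ∀ j ∈ J, 0 ≤ c j) :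
    ∃ K ⊆ J, LinearIndepOn ℝ Ψ ↑K ∧ ∃ d : ι → ℝ, (∀ k ∈ K, 0 ≤ d k) ∧
      ∑ j ∈ J, c j • Ψ j = ∑ k ∈ K, d k • Ψ k := by
  induction J using Finset.strongInduction generalizing c with
  | H J ih =>
  by_cases hli : LinearIndepOn ℝ Ψ ↑J
  · exact ⟨J, subset_rfl, hli, c, hc, rfl⟩
  obtain ⟨f, hf, hfpos⟩ : ∃ f : ι → ℝ, ∑ j ∈ J, f j • Ψ j = 0 ∧ ∃ j ∈ J, 0 < f j := by
    obtain ⟨f, hf, j, hj, hfj⟩ := not_linearIndepOn_finset_iff.1 hli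
    rcases hfj.lt_or_gt with h | h
    · exact ⟨-f, by simp [neg_smul, hf], j, hj, by simpa using h⟩
    · exact ⟨f, hf, j, hj, h⟩
  obtain ⟨i₀, hi₀, hmin⟩ := (J.filter (0 < f ·)).exists_min_image (fun j => c j / f j)
    (by obtain ⟨j, hj, h⟩ := hfpos; exact ⟨j, Finset.mem_filter.2 ⟨hj, h⟩⟩)
  rw [Finset.mem_filter] at hi₀
  set t := c i₀ / f i₀
  have hc' : ∀ j ∈ J, 0 ≤ c j - t * f j := fun j hj => by
    rcases le_or_gt (f j) 0 with h | h
    · nlinarith [hc j hj, div_nonneg (hc i₀ hi₀.1) hi₀.2.le]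
    · have := hmin j (Finset.mem_filter.2 ⟨hj, h⟩)
      rw [le_div_iff₀ h] at this
      linarith
  -- subtracting `t • f` keeps the sum and kills the coefficient at `i₀`
  have hsum : ∑ j ∈ J, c j • Ψ j = ∑ j ∈ J.erase i₀, (c j - t * f j) • Ψ j := by
    rw [Finset.sum_erase _ (by simp [t, div_mul_cancel₀ _ hi₀.2.ne'])]
    simp only [sub_smul, mul_smul, Finset.sum_sub_distrib, ← Finset.smul_sum, hf, smul_zero,
      sub_zero]
  obtain ⟨K, hK, hli, d, hd, hKsum⟩ := ih _ (Finset.erase_ssubset hi₀.1) _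
    fun j hj => hc' j (Finset.mem_of_mem_erase hj)
  exact ⟨K, hK.trans (Finset.erase_subset _ _), hli, d, hd, hsum.trans hKsum⟩

variable [Fintype ι] {Ψ' : ι → E} {s t : Set ι} {v : E}

lemma coneOf_mono (h : s ⊆ t) : coneOf Ψ s ⊆ coneOf Ψ t := by
  rintro v ⟨c, hc, hcs, rfl⟩
  exact ⟨c, hc, fun i hi => hcs i fun his => hi (h his), rfl⟩

lemma coneOf_congr (h : ∀ i ∈ s, Ψ i = Ψ' i) : coneOf Ψ s = coneOf Ψ' s := by
  suffices key : ∀ {Ψ Ψ' : ι → E}, (∀ i ∈ s, Ψ i = Ψ' i) → coneOf Ψ s ⊆ coneOf Ψ' s from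
    (key h).antisymm (key fun i hi => (h i hi).symm)
  rintro Ψ Ψ' h v ⟨c, hc, hcs, rfl⟩
  refine ⟨c, hc, hcs, Finset.sum_congr rfl fun i _ => ?_⟩
  by_cases hi : i ∈ s
  · rw [h i hi]
  · simp [hcs i hi]

lemma coneOf_subset_span : coneOf Ψ s ⊆ Submodule.span ℝ (Ψ '' s) := by
  rintro v ⟨c, -, hcs, rfl⟩
  refine Submodule.sum_mem _ fun i _ => ?_
  by_cases hi : i ∈ s
  · exact Submodule.smul_mem _ _ (Submodule.subset_span ⟨i, hi, rfl⟩)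
  · simp [hcs i hi]

lemma mem_coneOf_coe_finset_iff {J : Finset ι} :
    v ∈ coneOf Ψ ↑J ↔ ∃ c : ι → ℝ, (∀ j ∈ J, 0 ≤ c j) ∧ v = ∑ j ∈ J, c j • Ψ j := by
  constructor
  · rintro ⟨c, hc, hcJ, rfl⟩
    refine ⟨c, fun j _ => hc j, (Finset.sum_subset (Finset.subset_univ J) fun i _ hi => ?_).symm⟩
    simp [hcJ i hi]
  · rintro ⟨c, hc, rfl⟩
    refine ⟨fun i => if i ∈ J then c i else 0, fun i => ?_, fun i hi => if_neg hi, ?_⟩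
    · dsimp only
      split_ifs with h
      exacts [hc i h, le_rfl]
    · simp [ite_smul, Finset.sum_ite_mem]

lemma add_smul_mem_coneOf (hv : v ∈ coneOf Ψ s) {i : ι} (hi : i ∈ s) {t : ℝ} (ht : 0 ≤ t) :
    v + t • Ψ i ∈ coneOf Ψ s := by
  obtain ⟨c, hc, hcs, rfl⟩ := hv
  refine ⟨c + Pi.single i t, fun j => add_nonneg (hc j) ?_, fun j hj => ?_, ?_⟩
  · by_cases h : j = i <;> simp [h, ht]
  · have : j ≠ i := fun h => hj (h ▸ hi)
    simp [hcs j hj, this]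
  · simp [add_smul, Finset.sum_add_distrib, Pi.single_apply, ite_smul]

lemma map_nonneg_of_mem_coneOf (ℓ : E →ₗ[ℝ] ℝ) (hℓ : ∀ i ∈ s, 0 ≤ ℓ (Ψ i))
    (hv : v ∈ coneOf Ψ s) : 0 ≤ ℓ v := by
  obtain ⟨c, hc, hcs, rfl⟩ := hv
  rw [map_sum]
  refine Finset.sum_nonneg fun i _ => ?_
  by_cases hi : i ∈ s
  · rw [map_smul, smul_eq_mul]
    exact mul_nonneg (hc i) (hℓ i hi)
  · simp [hcs i hi]

lemma mem_coneOf_sep_of_map_eq_zero (ℓ : E →ₗ[ℝ] ℝ) (hℓ : ∀ i ∈ s, 0 ≤ ℓ (Ψ i))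
    (hv : v ∈ coneOf Ψ s) (h0 : ℓ v = 0) : v ∈ coneOf Ψ {i ∈ s | ℓ (Ψ i) = 0} := by
  obtain ⟨c, hc, hcs, rfl⟩ := hv
  have hterm : ∀ i, 0 ≤ c i * ℓ (Ψ i) := fun i => by
    by_cases hi : i ∈ s
    · exact mul_nonneg (hc i) (hℓ i hi)
    · simp [hcs i hi]
  simp only [map_sum, map_smul, smul_eq_mul] at h0
  have hzero := (Finset.sum_eq_zero_iff_of_nonneg fun i _ => hterm i).1 h0
  refine ⟨c, hc, fun i hi => ?_, rfl⟩
  by_cases his : i ∈ s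
  · exact (mul_eq_zero.1 (hzero i (Finset.mem_univ i))).resolve_right fun h => hi ⟨his, h⟩
  · exact hcs i his

lemma coneOf_coe_finset_eq_image (J : Finset ι) :
    coneOf Ψ ↑J = Fintype.linearCombination ℝ (fun j : J => Ψ j) '' {d | ∀ j, 0 ≤ d j} := by
  ext v
  rw [mem_coneOf_coe_finset_iff]
  constructor
  · rintro ⟨c, hc, rfl⟩
    exact ⟨fun j => c j, fun j => hc j j.2, by
      rw [Fintype.linearCombination_apply]; exact J.sum_coe_sort fun j => c j • Ψ j⟩
  · rintro ⟨d, hd, rfl⟩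
    refine ⟨fun i => if h : i ∈ J then d ⟨i, h⟩ else 0, fun j hj => by simpa [hj] using hd _, ?_⟩
    rw [Fintype.linearCombination_apply, ← J.sum_coe_sort]
    simp

end Cones

lemma span_image_eq_of_eq_or_eq_neg {E ι : Type*} [AddCommGroup E] [Module ℝ E] {Φ Ψ : ι → E}
    (hΨ : ∀ i, Ψ i = Φ i ∨ Ψ i = -Φ i) (s : Set ι) :
    Submodule.span ℝ (Ψ '' s) = Submodule.span ℝ (Φ '' s) := by
  suffices key : ∀ {Φ Ψ : ι → E}, (∀ i, Ψ i = Φ i ∨ Ψ i = -Φ i) →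
      Submodule.span ℝ (Ψ '' s) ≤ Submodule.span ℝ (Φ '' s) from
    (key hΨ).antisymm (key fun i => (hΨ i).imp Eq.symm fun h => by rw [h, neg_neg])
  intro Φ Ψ hΨ
  rw [Submodule.span_le]
  rintro _ ⟨i, hi, rfl⟩
  have hmem : Φ i ∈ Submodule.span ℝ (Φ '' s) := Submodule.subset_span ⟨i, hi, rfl⟩
  rcases hΨ i with h | h <;> rw [h]
  exacts [hmem, Submodule.neg_mem _ hmem]

section Walls

variable {F : Type*} [AddCommGroup F] [Module ℝ F] {ι : Type*} {Φ : ι → F} {H W : Submodule ℝ F}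

lemma IsWall.finrank_add_one (hH : IsWall Φ H) :
    Module.finrank ℝ H + 1 = Module.finrank ℝ F := by
  obtain ⟨S, hcard, hS, rfl⟩ := hH
  rw [Set.image_eq_range, ← hcard, ← Fintype.card_coe S, ← finrank_span_eq_card hS]
  rfl

lemma IsWall.eq_of_le [FiniteDimensional ℝ F] (hH : IsWall Φ H) (hW : IsWall Φ W) (hle : H ≤ W) :
    H = W :=
  Submodule.eq_of_le_of_finrank_eq hle
    (by have := hH.finrank_add_one; have := hW.finrank_add_one; omega)

lemma IsWall.exists_ker_eq [FiniteDimensional ℝ F] (hH : IsWall Φ H) :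
    ∃ ℓ : F →ₗ[ℝ] ℝ, LinearMap.ker ℓ = H := by
  have hrank : Module.finrank ℝ (F ⧸ H) = Module.finrank ℝ ℝ := by
    have := H.finrank_quotient_add_finrank
    have := hH.finrank_add_one
    rw [Module.finrank_self]
    omega
  exact ⟨(LinearEquiv.ofFinrankEq _ _ hrank).toLinearMap ∘ₗ H.mkQ, by
    rw [LinearEquiv.ker_comp, Submodule.ker_mkQ]⟩

lemma finite_setOf_isWall [Finite ι] (Φ : ι → F) : {H : Submodule ℝ F | IsWall Φ H}.Finite :=
  (Set.finite_range fun S : Finset ι => Submodule.span ℝ (Φ '' ↑S)).subset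
    fun _ ⟨S, _, _, hS⟩ => ⟨S, hS.symm⟩

/-- Extend a basis of `span (Φ '' J)` to a basis of `F` drawn from `Φ`, and drop one of the
new vectors. -/
lemma exists_isWall_le [Finite ι] (hgen : Submodule.span ℝ (Set.range Φ) = ⊤) {J : Set ι}
    (hJ : Submodule.span ℝ (Φ '' J) ≠ ⊤) : ∃ W, IsWall Φ W ∧ Submodule.span ℝ (Φ '' J) ≤ W := by
  have := Fintype.ofFinite ι
  obtain ⟨b₀, hb₀J, -, hJb₀, hb₀⟩ :=
    exists_linearIndepOn_extension (linearIndepOn_empty ℝ Φ) (Set.empty_subset J)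
  obtain ⟨b, -, hb₀b, hb, hbli⟩ := exists_linearIndepOn_extension hb₀ (Set.subset_univ b₀)
  have hJ' : Submodule.span ℝ (Φ '' J) ≤ Submodule.span ℝ (Φ '' b₀) := Submodule.span_le.2 hJb₀
  have hbspan : Submodule.span ℝ (Φ '' b) = ⊤ := by
    rw [eq_top_iff, ← hgen, ← Set.image_univ]
    exact Submodule.span_le.2 hb
  obtain ⟨k, hkb, hkb₀⟩ : ∃ k ∈ b, k ∉ b₀ := by
    by_contra! h
    refine hJ (eq_top_iff.2 ?_)
    rw [← hbspan]
    exact (Submodule.span_mono (Set.image_mono h)).trans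
      (Submodule.span_mono (Set.image_mono hb₀J))
  have hbcard : b.toFinset.card = Module.finrank ℝ F := by
    rw [← finrank_top ℝ F, ← hbspan, Set.image_eq_range, finrank_span_eq_card hbli,
      Set.toFinset_card]
  refine ⟨_, ⟨b.toFinset.erase k, ?_, ?_, rfl⟩, hJ'.trans (Submodule.span_mono
    (Set.image_mono fun i hi => ?_))⟩
  · rw [Finset.card_erase_of_mem (Set.mem_toFinset.2 hkb), ← hbcard]
    have : 0 < b.toFinset.card := Finset.card_pos.2 ⟨k, Set.mem_toFinset.2 hkb⟩
    omega
  · exact hbli.mono (by simp)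
  · simp only [Finset.coe_erase, Set.coe_toFinset]
    exact ⟨hb₀b hi, fun h => hkb₀ (h ▸ hi)⟩

end Walls

lemma IsPreconnected.pos_of_pos {X : Type*} [TopologicalSpace X] {s : Set X}
    (hs : IsPreconnected s) {f : X → ℝ} (hf : ContinuousOn f s) (h0 : ∀ x ∈ s, f x ≠ 0)
    {x y : X} (hx : x ∈ s) (hy : y ∈ s) (hfx : 0 < f x) : 0 < f y := by
  by_contra! hfy
  obtain ⟨z, hz, hfz⟩ := hs.intermediate_value hy hx hf ⟨hfy, hfx.le⟩
  exact h0 z hz hfz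

section Topes

open Filter Topology

variable {F : Type*} [NormedAddCommGroup F] [NormedSpace ℝ F] {ι : Type*} {Φ Ψ : ι → F}
  {τ τ' : Set F} {x y : F}

lemma isClosed_coneOf_of_linearIndepOn [Fintype ι] {J : Finset ι} (hJ : LinearIndepOn ℝ Ψ ↑J) :
    IsClosed (coneOf Ψ ↑J) := by
  have horthant : {d : J → ℝ | ∀ j, 0 ≤ d j} = ⋂ j, {d | 0 ≤ d j} := by ext; simp
  rw [coneOf_coe_finset_eq_image, horthant]
  exact (LinearMap.isClosedEmbedding_of_injective
    (LinearMap.ker_eq_bot.2 (linearIndependent_iff_injective_fintypeLinearCombination.1 hJ))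
    ).isClosedMap _ (isClosed_iInter fun j => isClosed_le continuous_const (continuous_apply j))

lemma isClosed_coneOf [Fintype ι] (Ψ : ι → F) (s : Set ι) : IsClosed (coneOf Ψ s) := by
  have hunion : coneOf Ψ s =
      ⋃ K ∈ {K : Finset ι | ↑K ⊆ s ∧ LinearIndepOn ℝ Ψ ↑K}, coneOf Ψ ↑K := by
    refine subset_antisymm (fun v hv => ?_) (Set.iUnion₂_subset fun K hK => coneOf_mono hK.1)
    rw [← Set.coe_toFinset s, mem_coneOf_coe_finset_iff] at hv
    obtain ⟨c, hc, rfl⟩ := hv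
    obtain ⟨K, hKs, hK, d, hd, hsum⟩ := exists_linearIndepOn_sum_eq (Ψ := Ψ) _ c hc
    exact Set.mem_iUnion₂.2 ⟨K, ⟨by simpa using Finset.coe_subset.2 hKs, hK⟩,
      mem_coneOf_coe_finset_iff.2 ⟨d, hd, hsum⟩⟩
  rw [hunion]
  exact (Set.toFinite _).isClosed_biUnion fun K hK => isClosed_coneOf_of_linearIndepOn hK.2

lemma span_eq_top_of_isRegular_of_mem_coneOf [Fintype ι]
    (hgen : Submodule.span ℝ (Set.range Φ) = ⊤) (hΨ : ∀ i, Ψ i = Φ i ∨ Ψ i = -Φ i)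
    {s : Set ι} (hx : IsRegular Φ x) (hxC : x ∈ coneOf Ψ s) :
    Submodule.span ℝ (Φ '' s) = ⊤ := by
  by_contra h
  obtain ⟨W, hW, hle⟩ := exists_isWall_le hgen h
  refine hx W hW (hle ?_)
  rw [← span_image_eq_of_eq_or_eq_neg hΨ]
  exact coneOf_subset_span hxC

lemma IsTope.isRegular (hτ : IsTope Φ τ) (hx : x ∈ τ) : IsRegular Φ x := by
  obtain ⟨μ, -, rfl⟩ := hτ
  exact connectedComponentIn_subset _ _ hx

lemma IsTope.nonempty (hτ : IsTope Φ τ) : τ.Nonempty := by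
  obtain ⟨μ, hμ, rfl⟩ := hτ
  exact ⟨μ, mem_connectedComponentIn hμ⟩

lemma IsTope.isPreconnected (hτ : IsTope Φ τ) : IsPreconnected τ := by
  obtain ⟨μ, -, rfl⟩ := hτ
  exact isPreconnected_connectedComponentIn

lemma IsTope.eq_connectedComponentIn (hτ : IsTope Φ τ) (hx : x ∈ τ) :
    τ = connectedComponentIn {z | IsRegular Φ z} x := by
  obtain ⟨μ, -, rfl⟩ := hτ
  exact connectedComponentIn_eq hx

lemma IsTope.eq_of_mem (hτ : IsTope Φ τ) (hτ' : IsTope Φ τ') (hx : x ∈ τ) (hx' : x ∈ τ') :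
    τ = τ' :=
  (hτ.eq_connectedComponentIn hx).trans (hτ'.eq_connectedComponentIn hx').symm

lemma IsTope.subset_of_isPreconnected (hτ : IsTope Φ τ) {s : Set F} (hs : IsPreconnected s)
    (hreg : s ⊆ {z | IsRegular Φ z}) (hx : x ∈ s) (hxτ : x ∈ τ) : s ⊆ τ := by
  rw [hτ.eq_connectedComponentIn hxτ]
  exact hs.subset_connectedComponentIn hx hreg

lemma IsTope.mem_gens_iff [Fintype ι] (hgen : Submodule.span ℝ (Set.range Φ) = ⊤)
    (hΨ : ∀ i, Ψ i = Φ i ∨ Ψ i = -Φ i) (hτ : IsTope Φ τ) {I : Finset ι} :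
    I ∈ Gens Ψ τ ↔ τ ⊆ coneOf Ψ ↑I := by
  refine ⟨fun h => h.2, fun h => ⟨?_, h⟩⟩
  obtain ⟨x, hx⟩ := hτ.nonempty
  rw [span_image_eq_of_eq_or_eq_neg hΨ]
  exact span_eq_top_of_isRegular_of_mem_coneOf hgen hΨ (hτ.isRegular hx) (h hx)

variable [FiniteDimensional ℝ F]

/-- The support of a regular point spans `F` (otherwise the point lies on a wall), so the
positive orthant on the support maps onto a neighbourhood of the point. -/
lemma coneOf_mem_nhds_of_isRegular [Fintype ι] (hgen : Submodule.span ℝ (Set.range Φ) = ⊤)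
    (hΨ : ∀ i, Ψ i = Φ i ∨ Ψ i = -Φ i) {s : Set ι} (hx : IsRegular Φ x)
    (hxC : x ∈ coneOf Ψ s) : coneOf Ψ s ∈ 𝓝 x := by
  obtain ⟨c, hc, hcs, rfl⟩ := hxC
  set J := Finset.univ.filter fun i => 0 < c i
  set L := Fintype.linearCombination ℝ (fun j : J => Ψ j)
  have hJs : ↑J ⊆ s := fun i hi => by_contra fun h => (Finset.mem_filter.1 hi).2.ne' (hcs i h)
  have hxL : ∑ i, c i • Ψ i = L fun j => c j := by
    rw [Fintype.linearCombination_apply, J.sum_coe_sort fun j => c j • Ψ j, Finset.sum_filter]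
    refine Finset.sum_congr rfl fun i _ => ?_
    split_ifs with h
    · rfl
    · simp [le_antisymm (not_lt.1 h) (hc i)]
  have hsurj : Function.Surjective L := by
    have hrange : Set.range (fun j : J => Ψ j) = Ψ '' ↑J := by ext; simp
    rw [← LinearMap.range_eq_top, Fintype.range_linearCombination, hrange,
      span_image_eq_of_eq_or_eq_neg hΨ]
    refine span_eq_top_of_isRegular_of_mem_coneOf hgen hΨ hx ?_
    rw [hxL, coneOf_coe_finset_eq_image]
    exact ⟨_, fun j => (Finset.mem_filter.1 j.2).2.le, rfl⟩
  have horthant : {d : J → ℝ | ∀ j, 0 < d j} = ⋂ j, {d | 0 < d j} := by ext; simp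
  have hopen : IsOpen {d : J → ℝ | ∀ j, 0 < d j} := by
    rw [horthant]
    exact isOpen_iInter_of_finite fun j => isOpen_lt continuous_const (continuous_apply j)
  rw [hxL]
  refine Filter.mem_of_superset ((L.isOpenMap_of_finiteDimensional hsurj).image_mem_nhds
    (hopen.mem_nhds fun j => (Finset.mem_filter.1 j.2).2)) ?_
  have hsub : L '' {d | ∀ j, 0 < d j} ⊆ coneOf Ψ ↑J := by
    rw [coneOf_coe_finset_eq_image]
    exact Set.image_mono fun d hd j => (hd j).le
  exact hsub.trans (coneOf_mono hJs)

lemma IsTope.pos_of_pos (hτ : IsTope Φ τ) {ℓ : F →ₗ[ℝ] ℝ}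
    (hℓ : IsWall Φ (LinearMap.ker ℓ)) (hx : x ∈ τ) (hy : y ∈ τ) (hℓx : 0 < ℓ x) : 0 < ℓ y :=
  IsPreconnected.pos_of_pos hτ.isPreconnected ℓ.continuous_of_finiteDimensional.continuousOn
    (fun _ hz h0 => hτ.isRegular hz _ hℓ h0) hx hy hℓx

lemma segment_subset_setOf_isRegular (hx : IsRegular Φ x)
    (h : ∀ ℓ : F →ₗ[ℝ] ℝ, IsWall Φ (LinearMap.ker ℓ) → 0 < ℓ x → 0 < ℓ y) :
    segment ℝ x y ⊆ {z | IsRegular Φ z} := by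
  rintro _ ⟨a, b, ha, hb, hab, rfl⟩ W hW hmem
  have key : ∀ ℓ : F →ₗ[ℝ] ℝ, IsWall Φ (LinearMap.ker ℓ) → 0 < ℓ x →
      0 < ℓ (a • x + b • y) := fun ℓ hℓ hℓx => by
    have hℓy := h ℓ hℓ hℓx
    rw [map_add, map_smul, map_smul, smul_eq_mul, smul_eq_mul]
    rcases ha.eq_or_lt with rfl | ha
    · rw [zero_add] at hab
      simpa [hab] using hℓy
    · nlinarith [mul_pos ha hℓx, mul_nonneg hb hℓy.le]
  obtain ⟨ℓ, rfl⟩ := hW.exists_ker_eq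
  rcases (show ℓ x ≠ 0 from fun h0 => hx _ hW h0).lt_or_gt with hneg | hpos
  · have := key (-ℓ) (by rwa [LinearMap.ker_neg]) (by simpa using hneg)
    simp [LinearMap.mem_ker.1 hmem] at this
  · exact (key ℓ hW hpos).ne' hmem

lemma IsTope.convex (hτ : IsTope Φ τ) : Convex ℝ τ :=
  convex_iff_segment_subset.2 fun x hx y hy =>
    hτ.subset_of_isPreconnected (convex_segment x y).isPreconnected
      (segment_subset_setOf_isRegular (hτ.isRegular hx) fun _ hℓ => hτ.pos_of_pos hℓ hx hy)
      (left_mem_segment ℝ x y) hx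

lemma IsTope.smul_mem (hτ : IsTope Φ τ) (hx : x ∈ τ) {t : ℝ} (ht : 0 < t) :
    t • x ∈ τ :=
  hτ.subset_of_isPreconnected (convex_segment x (t • x)).isPreconnected
    (segment_subset_setOf_isRegular (hτ.isRegular hx) fun ℓ _ hℓx => by
      rw [map_smul, smul_eq_mul]; positivity)
    (left_mem_segment ℝ _ _) hx (right_mem_segment ℝ _ _)

lemma IsTope.zero_mem_closure (hτ : IsTope Φ τ) : (0 : F) ∈ closure τ := by
  obtain ⟨x, hx⟩ := hτ.nonempty
  have hlim : Tendsto (fun t : ℝ => t • x) (𝓝[>] 0) (𝓝 0) := by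
    simpa using ((tendsto_id (x := 𝓝 (0 : ℝ))).mono_left nhdsWithin_le_nhds).smul_const x
  exact mem_closure_of_tendsto hlim (eventually_mem_nhdsWithin.mono fun t ht => hτ.smul_mem hx ht)

lemma IsTope.subset_coneOf_of_mem [Fintype ι] (hgen : Submodule.span ℝ (Set.range Φ) = ⊤)
    (hΨ : ∀ i, Ψ i = Φ i ∨ Ψ i = -Φ i) {s : Set ι} (hτ : IsTope Φ τ) (hx : x ∈ τ)
    (hxC : x ∈ coneOf Ψ s) : τ ⊆ coneOf Ψ s := by
  have key : ∀ y ∈ τ, y ∈ coneOf Ψ s → y ∈ interior (coneOf Ψ s) := fun y hy hyC =>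
    mem_interior_iff_mem_nhds.2 (coneOf_mem_nhds_of_isRegular hgen hΨ (hτ.isRegular hy) hyC)
  refine (hτ.isPreconnected.subset_of_closure_inter_subset isOpen_interior
    ⟨x, hx, key x hx hxC⟩ ?_).trans interior_subset
  rintro y ⟨hy, hyτ⟩
  exact key y hyτ (closure_minimal interior_subset (isClosed_coneOf Ψ s) hy)

end Topes

lemma Convex.exists_mem_forall_notMem {E : Type*} [AddCommGroup E] [Module ℝ E] {s : Set E}
    (hs : Convex ℝ s) (hne : s.Nonempty) (𝒲 : Finset (Submodule ℝ E))
    (h : ∀ W ∈ 𝒲, ¬s ⊆ W) : ∃ x ∈ s, ∀ W ∈ 𝒲, x ∉ W := by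
  induction 𝒲 using Finset.induction_on with
  | empty =>
    obtain ⟨x, hx⟩ := hne
    exact ⟨x, hx, by simp⟩
  | insert W 𝒲 _ ih =>
    obtain ⟨x, hxs, hx⟩ := ih fun V hV => h V (Finset.mem_insert_of_mem hV)
    obtain ⟨y, hys, hyW⟩ := Set.not_subset.1 (h W (Finset.mem_insert_self W 𝒲))
    -- the line through `x` and `y` meets each `V` at most once, as `x` or `y` is not in `V`
    have hbad : ∀ V ∈ insert W 𝒲, {t : ℝ | x + t • (y - x) ∈ V}.Subsingleton := by
      intro V hV t₁ ht₁ t₂ ht₂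
      by_contra hne
      have hyx : y - x ∈ V := by
        have := V.sub_mem ht₁ ht₂
        rw [add_sub_add_left_eq_sub, ← sub_smul] at this
        exact (V.smul_mem_iff (sub_ne_zero.2 hne)).1 this
      have hxV : x ∈ V := by simpa using V.sub_mem ht₁ (V.smul_mem t₁ hyx)
      rcases Finset.mem_insert.1 hV with rfl | hV
      · exact hyW (by simpa using V.add_mem hxV hyx)
      · exact hx V hV hxV
    have hfin : (⋃ V ∈ insert W 𝒲, {t : ℝ | x + t • (y - x) ∈ V}).Finite :=
      (Finset.finite_toSet _).biUnion fun V hV => (hbad V hV).finite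
    obtain ⟨t, ht, htV⟩ := ((Set.Icc_infinite zero_lt_one).sdiff hfin).nonempty
    exact ⟨x + t • (y - x), hs.add_smul_sub_mem hxs hys ht,
      fun V hV hmem => htV (Set.mem_biUnion hV hmem)⟩

lemma inOpenSideOf_ker_iff {E : Type*} [AddCommGroup E] [Module ℝ E] {τ : Set E}
    {ℓ : E →ₗ[ℝ] ℝ} (hpos : ∀ y ∈ τ, 0 < ℓ y) (hne : τ.Nonempty) {v : E} :
    InOpenSideOf (LinearMap.ker ℓ) τ v ↔ 0 < ℓ v := by
  refine ⟨fun ⟨ξ, hξ, hξτ, hξv⟩ => ?_, fun hv => ⟨ℓ, fun _ h => h, hpos, hv⟩⟩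
  obtain ⟨c, rfl⟩ : ∃ c : ℝ, c • ℓ = ξ := by
    have := mem_span_of_iInf_ker_le_ker (L := fun _ : Unit => ℓ) (K := ξ)
      (by rw [iInf_const]; exact fun v hv => hξ v hv)
    simpa [Submodule.mem_span_singleton] using this
  obtain ⟨y, hy⟩ := hne
  have hcy := hξτ y hy
  simp only [LinearMap.smul_apply, smul_eq_mul] at hcy hξv
  have hc : 0 < c := pos_of_mul_pos_left hcy (hpos y hy).le
  exact pos_of_mul_pos_right hξv hc.le

section Sides

open Filter Topology

variable {F : Type*} [NormedAddCommGroup F] [NormedSpace ℝ F] [FiniteDimensional ℝ F]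
  {ι : Type*} {Φ Ψ : ι → F} {τ τ₁ τ₂ : Set F} {H : Submodule ℝ F} {ℓ : F →ₗ[ℝ] ℝ} {μ : F}

/-- `τ` lies in the half-space `0 < ℓ` and fills it near the point `μ` of `ker ℓ`. -/
structure IsSideAt (τ : Set F) (ℓ : F →ₗ[ℝ] ℝ) (μ : F) : Prop where
  pos : ∀ y ∈ τ, 0 < ℓ y
  map_eq_zero : ℓ μ = 0
  mem_closure : μ ∈ closure τ
  eventually_add_smul_mem : ∀ v, 0 < ℓ v → ∀ᶠ t in 𝓝[>] (0 : ℝ), μ + t • v ∈ τ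

lemma IsTope.eventually_add_smul_mem [Finite ι] (hτ : IsTope Φ τ) (hpos : ∀ y ∈ τ, 0 < ℓ y)
    (hμ : μ ∈ closure τ) (hμW : ∀ W, IsWall Φ W → W ≠ LinearMap.ker ℓ → μ ∉ W) {v : F}
    (hv : 0 < ℓ v) : ∀ᶠ t in 𝓝[>] (0 : ℝ), μ + t • v ∈ τ := by
  set K := ⋃ W ∈ {W | IsWall Φ W ∧ W ≠ LinearMap.ker ℓ}, (W : Set F)
  have hK : IsClosed K := ((finite_setOf_isWall Φ).subset fun W hW => hW.1).isClosed_biUnion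
    fun W _ => W.closed_of_finiteDimensional
  obtain ⟨δ, hδ, hball⟩ := Metric.isOpen_iff.1 hK.isOpen_compl μ
    (by simpa [K] using fun W hW hWℓ => hμW W hW hWℓ)
  obtain ⟨y, hyτ, hyμ⟩ := Metric.mem_closure_iff.1 hμ δ hδ
  have hμℓ : 0 ≤ ℓ μ := closure_minimal (fun y hy => (hpos y hy).le)
    (isClosed_le continuous_const ℓ.continuous_of_finiteDimensional) hμ
  have hlim : Tendsto (fun t : ℝ => μ + t • v) (𝓝[>] 0) (𝓝 μ) := by
    simpa using tendsto_const_nhds.add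
      (((tendsto_id (x := 𝓝 (0 : ℝ))).mono_left nhdsWithin_le_nhds).smul_const v)
  filter_upwards [hlim (Metric.ball_mem_nhds μ hδ), self_mem_nhdsWithin] with t hzball ht
  have hℓz : 0 < ℓ (μ + t • v) := by
    rw [map_add, map_smul, smul_eq_mul]
    nlinarith [mul_pos (Set.mem_Ioi.1 ht) hv]
  -- the segment from a point of `τ` near `μ` to `μ + t • v` stays in the ball, off `ker ℓ`
  refine hτ.subset_of_isPreconnected (convex_segment y _).isPreconnected ?_
    (left_mem_segment ℝ _ _) hyτ (right_mem_segment ℝ _ _)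
  intro w hw W hW hwW
  by_cases hWℓ : W = LinearMap.ker ℓ
  · subst hWℓ
    exact ((convex_halfSpace_gt ℓ.isLinear 0).segment_subset (hpos y hyτ) hℓz hw).ne'
      (LinearMap.mem_ker.1 hwW)
  · have hwball : w ∈ Metric.ball μ δ := (convex_ball μ δ).segment_subset
      (Metric.mem_ball.2 (by rwa [dist_comm])) hzball hw
    exact hball hwball (Set.mem_biUnion ⟨hW, hWℓ⟩ hwW)

lemma Adjacent.exists_mem_closure_forall_notMem [Finite ι] (hadj : Adjacent Φ τ₁ τ₂ H) :
    ∃ μ ∈ closure τ₁ ∩ closure τ₂, ∀ W, IsWall Φ W → W ≠ H → μ ∉ W := by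
  obtain ⟨hτ₁, hτ₂, -, hH, -, hspan⟩ := hadj
  have hfin : {W | IsWall Φ W ∧ W ≠ H}.Finite :=
    (finite_setOf_isWall Φ).subset fun W hW => hW.1
  obtain ⟨μ, hμ, hμW⟩ := Convex.exists_mem_forall_notMem
    (hτ₁.convex.closure.inter hτ₂.convex.closure)
    ⟨0, hτ₁.zero_mem_closure, hτ₂.zero_mem_closure⟩ hfin.toFinset fun W hW hsub => by
      rw [Set.Finite.mem_toFinset] at hW
      exact hW.2 (hH.eq_of_le hW.1 (hspan ▸ Submodule.span_le.2 hsub)).symm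
  exact ⟨μ, hμ, fun W hW hWH => hμW W (hfin.mem_toFinset.2 ⟨hW, hWH⟩)⟩

lemma Adjacent.exists_isSideAt [Finite ι] (hadj : Adjacent Φ τ₁ τ₂ H) :
    ∃ (ξ : F →ₗ[ℝ] ℝ) (μ : F), LinearMap.ker ξ = H ∧ IsSideAt τ₁ ξ μ ∧ IsSideAt τ₂ (-ξ) μ := by
  obtain ⟨μ, ⟨hμ₁, hμ₂⟩, hμW⟩ := hadj.exists_mem_closure_forall_notMem
  obtain ⟨hτ₁, hτ₂, hne, hH, hsubH, -⟩ := hadj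
  obtain ⟨y₁, hy₁⟩ := hτ₁.nonempty
  obtain ⟨ξ, rfl, hξy₁⟩ : ∃ ξ : F →ₗ[ℝ] ℝ, LinearMap.ker ξ = H ∧ 0 < ξ y₁ := by
    obtain ⟨ℓ, rfl⟩ := hH.exists_ker_eq
    rcases (show ℓ y₁ ≠ 0 from hτ₁.isRegular hy₁ _ hH).lt_or_gt with h | h
    · exact ⟨-ℓ, LinearMap.ker_neg ℓ, by simpa using h⟩
    · exact ⟨ℓ, rfl, h⟩
  have hpos₁ : ∀ y ∈ τ₁, 0 < ξ y := fun y hy => hτ₁.pos_of_pos hH hy₁ hy hξy₁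
  have hμξ : ξ μ = 0 := hsubH ⟨hμ₁, hμ₂⟩
  have hneg₂ : ∀ y ∈ τ₂, 0 < (-ξ) y := by
    intro y hy
    refine neg_pos.2 ((show ξ y ≠ 0 from hτ₂.isRegular hy _ hH).lt_or_gt.resolve_right
      fun hξy => hne ?_)
    -- otherwise both topes fill the side `0 < ξ` near `μ`, so they meet
    have hpos₂ : ∀ z ∈ τ₂, 0 < ξ z := fun z hz => hτ₂.pos_of_pos hH hy hz hξy
    obtain ⟨t, ht₁, ht₂⟩ := ((hτ₁.eventually_add_smul_mem hpos₁ hμ₁ hμW hξy).and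
      (hτ₂.eventually_add_smul_mem hpos₂ hμ₂ hμW hξy)).exists
    exact hτ₁.eq_of_mem hτ₂ ht₁ ht₂
  refine ⟨ξ, μ, rfl, ⟨hpos₁, hμξ, hμ₁, fun v hv => hτ₁.eventually_add_smul_mem hpos₁ hμ₁ hμW hv⟩,
    ⟨hneg₂, by simp [hμξ], hμ₂, fun v hv => hτ₂.eventually_add_smul_mem hneg₂ hμ₂ ?_ hv⟩⟩
  simpa only [LinearMap.ker_neg] using hμW

lemma IsSideAt.subset_coneOf_iff [Fintype ι] (hgen : Submodule.span ℝ (Set.range Φ) = ⊤)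
    (hΨ : ∀ i, Ψ i = Φ i ∨ Ψ i = -Φ i) (hτ : IsTope Φ τ) (h : IsSideAt τ ℓ μ) {s : Set ι} :
    τ ⊆ coneOf Ψ s ↔ μ ∈ coneOf Ψ s ∧ ∃ i ∈ s, 0 < ℓ (Ψ i) := by
  constructor
  · intro hsub
    refine ⟨closure_minimal hsub (isClosed_coneOf Ψ s) h.mem_closure, ?_⟩
    by_contra! hle
    obtain ⟨y, hy⟩ := hτ.nonempty
    have := map_nonneg_of_mem_coneOf (-ℓ) (fun i hi => by simpa using hle i hi) (hsub hy)
    simp only [LinearMap.neg_apply, neg_nonneg] at this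
    linarith [h.pos y hy]
  · rintro ⟨hμC, i, hi, hℓi⟩
    obtain ⟨t, hmem, ht⟩ := ((h.eventually_add_smul_mem _ hℓi).and self_mem_nhdsWithin).exists
    exact hτ.subset_coneOf_of_mem hgen hΨ hmem (add_smul_mem_coneOf hμC hi (le_of_lt ht))

lemma IsSideAt.mem_gens_iff [Fintype ι] (hgen : Submodule.span ℝ (Set.range Φ) = ⊤)
    (hΨ : ∀ i, Ψ i = Φ i ∨ Ψ i = -Φ i) (hτ : IsTope Φ τ) (h : IsSideAt τ ℓ μ) {I : Finset ι} :
    I ∈ Gens Ψ τ ↔ μ ∈ coneOf Ψ ↑I ∧ ∃ i ∈ I, 0 < ℓ (Ψ i) :=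
  (hτ.mem_gens_iff hgen hΨ).trans (h.subset_coneOf_iff hgen hΨ hτ)

end Sides

section Polynomial

variable {ι : Type*} [Fintype ι] {E : Type*} [AddCommGroup E] [Module ℝ E]

/-- The coefficient of `bgTerm I` in `X(Ψ,τ)`, its sign `(-1)^(|I|-r)` written as `(-1)^(|I|+r)`
(they agree, as `r ≤ |I|` on `Gens Ψ τ`). -/
def bgCoeff (Ψ : ι → E) (τ : Set E) (I : Finset ι) : ℤ :=
  if I ∈ Gens Ψ τ then (-1) ^ (I.card + Module.finrank ℝ E) else 0

lemma finrank_le_card_of_mem_gens {Ψ : ι → E} {τ : Set E} {I : Finset ι} (hI : I ∈ Gens Ψ τ) :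
    Module.finrank ℝ E ≤ I.card := by
  have := finrank_span_finset_le_card (R := ℝ) (I.image Ψ)
  rw [Finset.coe_image, Set.finrank, hI.1, finrank_top] at this
  exact this.trans Finset.card_image_le

variable [DecidableEq ι]

def bgTerm (I : Finset ι) : MvPolynomial (ι ⊕ ι) ℤ :=
  (∏ j ∈ Iᶜ, X (Sum.inl j)) * ∏ i ∈ I, (X (Sum.inl i) + X (Sum.inr i))

lemma bgTerm_eq_prod (J : Finset ι) :
    bgTerm J = ∏ i, if i ∈ J then X (Sum.inl i) + X (Sum.inr i) else X (Sum.inl i) := by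
  rw [bgTerm, Finset.prod_ite, mul_comm]
  congr 2 <;> ext <;> simp

/-- Expand `q_i = (p_i + q_i) - p_i` for `i ∈ A \ I`. -/
lemma FlipPoly_bgTerm (A I : Finset ι) :
    FlipPoly A (bgTerm I) =
      ∑ J, (if I ⊆ J ∧ J ⊆ I ∪ A then (-1) ^ (A \ J).card else 0) * bgTerm J := by
  have hflip : FlipPoly A (bgTerm I) =
      ∏ i, ((if i ∈ I ∪ A then X (Sum.inl i) + X (Sum.inr i) else 0) +
        if i ∈ I then 0 else if i ∈ A then -X (Sum.inl i) else X (Sum.inl i)) := by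
    rw [FlipPoly, bgTerm_eq_prod, map_prod]
    refine Finset.prod_congr rfl fun i _ => ?_
    by_cases hI : i ∈ I <;> by_cases hA : i ∈ A <;> simp [hI, hA, flipVar, add_comm]
  rw [hflip, Finset.prod_add, Finset.powerset_univ]
  refine Finset.sum_congr rfl fun J _ => ?_
  split_ifs with hJ
  · obtain ⟨hIJ, hJIA⟩ := hJ
    have hsigns : ∏ i ∈ Jᶜ, (if i ∈ A then (-1 : MvPolynomial (ι ⊕ ι) ℤ) else 1) =
        (-1) ^ (A \ J).card := by
      rw [Finset.prod_ite, Finset.prod_const, Finset.prod_const_one, mul_one]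
      congr 2
      ext
      simp [and_comm]
    rw [← Finset.compl_eq_univ_sdiff, bgTerm, ← hsigns,
      Finset.prod_congr rfl fun i hi => if_pos (hJIA hi),
      Finset.prod_congr rfl fun i hi => if_neg fun hiI => Finset.mem_compl.1 hi (hIJ hiI),
      ← Finset.prod_congr rfl fun i _ => show
        (if i ∈ A then (-1 : MvPolynomial (ι ⊕ ι) ℤ) else 1) * X (Sum.inl i) =
          if i ∈ A then -X (Sum.inl i) else X (Sum.inl i) by split_ifs <;> simp,
      Finset.prod_mul_distrib]
    ring
  · rw [zero_mul]
    rcases not_and_or.1 hJ with h | h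
    · obtain ⟨i, hiI, hiJ⟩ := Finset.not_subset.1 h
      exact mul_eq_zero_of_right _ (Finset.prod_eq_zero (i := i) (by simpa using hiJ)
        (by simp [hiI]))
    · obtain ⟨i, hiJ, hi⟩ := Finset.not_subset.1 h
      exact mul_eq_zero_of_left (Finset.prod_eq_zero hiJ (by simp [hi])) _

lemma BGpoly_eq_sum (Ψ : ι → E) (τ : Set E) :
    BGpoly Ψ τ = ∑ I, (bgCoeff Ψ τ I : MvPolynomial (ι ⊕ ι) ℤ) * bgTerm I := by
  refine Finset.sum_congr rfl fun I _ => ?_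
  unfold bgCoeff
  split_ifs with hI
  · obtain ⟨k, hk⟩ := Nat.exists_eq_add_of_le (finrank_le_card_of_mem_gens hI)
    have hsign : (-1 : ℤ) ^ (I.card + Module.finrank ℝ E) =
        (-1) ^ (I.card - Module.finrank ℝ E) := by
      rw [hk, Nat.add_sub_cancel_left, add_comm _ k, add_assoc, ← two_mul, pow_add, pow_mul,
        neg_one_sq, one_pow, mul_one]
    rw [hsign, bgTerm]
    push_cast
    ring
  · simp

lemma FlipPoly_BGpoly (A : Finset ι) (Ψ : ι → E) (τ : Set E) :
    FlipPoly A (BGpoly Ψ τ) = ∑ J, (((-1) ^ (A \ J).card *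
      ∑ I ∈ Finset.Icc (J \ A) J, bgCoeff Ψ τ I : ℤ) : MvPolynomial (ι ⊕ ι) ℤ) * bgTerm J := by
  have hFlip : ∀ P, FlipPoly A P = MvPolynomial.rename (flipVar A) P := fun _ => rfl
  rw [BGpoly_eq_sum, hFlip, map_sum]
  simp_rw [map_mul, map_intCast, ← hFlip, FlipPoly_bgTerm, Finset.mul_sum]
  rw [Finset.sum_comm]
  refine Finset.sum_congr rfl fun J _ => ?_
  have hIcc : Finset.Icc (J \ A) J = Finset.univ.filter fun I => I ⊆ J ∧ J ⊆ I ∪ A := by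
    ext I
    simp only [Finset.mem_Icc, Finset.mem_filter, Finset.mem_univ, true_and, Finset.subset_iff,
      Finset.mem_sdiff, Finset.mem_union]
    exact ⟨fun ⟨h₁, h₂⟩ => ⟨h₂, fun x hx => or_iff_not_imp_right.2 fun h => h₁ ⟨hx, h⟩⟩,
      fun ⟨h₁, h₂⟩ => ⟨fun x hx => (h₂ hx.1).resolve_right hx.2, h₁⟩⟩
  rw [hIcc, Finset.sum_filter, Int.cast_sum, Finset.sum_mul]
  refine Finset.sum_congr rfl fun I _ => ?_
  split_ifs <;> push_cast <;> ring

end Polynomial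

lemma sum_Icc_neg_one_pow_card {α : Type*} [DecidableEq α] {s t : Finset α} (h : s ⊆ t) :
    ∑ I ∈ Finset.Icc s t, (-1 : ℤ) ^ I.card = if s = t then (-1) ^ s.card else 0 := by
  have hdisj : ∀ a ∈ (t \ s).powerset, Disjoint s a := fun a ha =>
    Finset.disjoint_of_subset_right (Finset.mem_powerset.1 ha) Finset.disjoint_sdiff
  rw [Finset.Icc_eq_image_powerset h, Finset.sum_image fun a ha b hb hab => by
    rw [← Finset.union_sdiff_cancel_left (hdisj a ha),
      ← Finset.union_sdiff_cancel_left (hdisj b hb), hab]]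
  rw [Finset.sum_congr rfl fun a ha => by rw [Finset.card_union_of_disjoint (hdisj a ha), pow_add],
    ← Finset.mul_sum, Finset.sum_powerset_neg_one_pow_card]
  by_cases hst : s = t
  · subst hst
    simp
  · rw [if_neg (mt Finset.sdiff_eq_empty_iff_subset.1 fun hts => hst (h.antisymm hts)),
      if_neg hst, mul_zero]

lemma sum_Icc_neg_one_pow_card_mul_ite {α : Type*} [DecidableEq α] {s t : Finset α} (h : s ⊆ t)
    (m : Prop) [Decidable m] :
    ∑ I ∈ Finset.Icc s t, (-1 : ℤ) ^ I.card * (if I ≠ s ∨ m then 1 else 0) =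
      (-1) ^ s.card * ((if s = t then 1 else 0) - if m then 0 else 1) := by
  have hs : s ∈ Finset.Icc s t := Finset.mem_Icc.2 ⟨le_rfl, h⟩
  by_cases hm : m
  · simp only [hm, or_true, if_true, mul_one, sum_Icc_neg_one_pow_card h]
    split_ifs <;> ring
  · simp only [hm, or_false, if_false]
    rw [Finset.sum_congr rfl fun I _ => show (-1 : ℤ) ^ I.card * (if I ≠ s then 1 else 0) =
      (-1) ^ I.card - if I = s then (-1) ^ I.card else 0 by split_ifs <;> simp_all,
      Finset.sum_sub_distrib, Finset.sum_ite_eq' _ _ _, if_pos hs, sum_Icc_neg_one_pow_card h]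
    split_ifs <;> ring

lemma flipSeq_eq_or_eq_neg {E ι : Type*} [AddCommGroup E] [DecidableEq ι] (Φ : ι → E)
    (A : Finset ι) (i : ι) : flipSeq Φ A i = Φ i ∨ flipSeq Φ A i = -Φ i := by
  unfold flipSeq
  split_ifs <;> simp

section Counting

variable {E : Type*} [AddCommGroup E] [Module ℝ E] {ι : Type*}
  {Φ : ι → E} {ξ : E →ₗ[ℝ] ℝ} {μ : E} {A I J : Finset ι}

lemma mem_coneOf_flipSeq_iff [Fintype ι] [DecidableEq ι] (hA : ∀ i, i ∈ A ↔ 0 < ξ (Φ i))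
    (hμ : ξ μ = 0) (hI : I ∈ Finset.Icc (J \ A) J) :
    μ ∈ coneOf (flipSeq Φ A) ↑I ↔ μ ∈ coneOf Φ {i | i ∈ J ∧ ξ (Φ i) = 0} := by
  obtain ⟨hJA, hIJ⟩ := Finset.mem_Icc.1 hI
  have hflip : ∀ i, i ∉ A → flipSeq Φ A i = Φ i := fun i hi => if_neg hi
  rw [← coneOf_congr fun i hi => hflip i fun hiA => ((hA i).1 hiA).ne' hi.2]
  constructor
  · -- all generators of the flipped cone lie in `ξ ≤ 0`, so `μ ∈ ker ξ` lies in the face `ξ = 0`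
    intro hμI
    refine coneOf_mono ?_ (mem_coneOf_sep_of_map_eq_zero (-ξ) (fun i _ => ?_) hμI (by simp [hμ]))
    · rintro i ⟨hiI, hi0⟩
      have hiA : i ∉ A := fun hiA => by
        simp only [flipSeq, hiA, if_true, map_neg, neg_neg, LinearMap.neg_apply] at hi0
        exact ((hA i).1 hiA).ne' hi0
      exact ⟨hIJ hiI, by simpa [hflip i hiA] using hi0⟩
    · by_cases hiA : i ∈ A
      · simpa [flipSeq, hiA] using ((hA i).1 hiA).le
      · simpa [hflip i hiA] using not_lt.1 (mt (hA i).2 hiA)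
  · intro h
    refine coneOf_mono ?_ h
    rintro i ⟨hiJ, hi0⟩
    exact Finset.mem_coe.2 (hJA (Finset.mem_sdiff.2 ⟨hiJ, fun hiA => ((hA i).1 hiA).ne' hi0⟩))

lemma exists_flipSeq_neg_iff [DecidableEq ι] (hA : ∀ i, i ∈ A ↔ 0 < ξ (Φ i))
    (hI : I ∈ Finset.Icc (J \ A) J) :
    (∃ i ∈ I, 0 < (-ξ) (flipSeq Φ A i)) ↔ I ≠ J \ A ∨ ∃ i ∈ J, 0 < (-ξ) (Φ i) := by
  obtain ⟨hJA, hIJ⟩ := Finset.mem_Icc.1 hI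
  constructor
  · rintro ⟨i, hiI, hi⟩
    by_cases hiA : i ∈ A
    · exact Or.inl fun h => (Finset.mem_sdiff.1 (h ▸ hiI)).2 hiA
    · exact Or.inr ⟨i, hIJ hiI, by simpa [flipSeq, hiA] using hi⟩
  · rintro (hne | ⟨i, hiJ, hi⟩)
    · obtain ⟨i, hiI, hi⟩ := Finset.exists_of_ssubset (lt_of_le_of_ne hJA (Ne.symm hne))
      have hiA : i ∈ A := by_contra fun h => hi (Finset.mem_sdiff.2 ⟨hIJ hiI, h⟩)
      exact ⟨i, hiI, by simpa [flipSeq, hiA] using (hA i).1 hiA⟩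
    · have hiA : i ∉ A := fun hiA => by
        simp only [LinearMap.neg_apply, neg_pos] at hi
        exact lt_asymm hi ((hA i).1 hiA)
      exact ⟨i, hJA (Finset.mem_sdiff.2 ⟨hiJ, hiA⟩), by simpa [flipSeq, hiA] using hi⟩

lemma exists_pos_and_exists_neg_of_mem_coneOf [Fintype ι] (hμ : ξ μ = 0) (hw : μ ∈ coneOf Φ ↑J)
    (hz : μ ∉ coneOf Φ {i | i ∈ J ∧ ξ (Φ i) = 0}) :
    (∃ i ∈ J, 0 < ξ (Φ i)) ∧ ∃ i ∈ J, 0 < (-ξ) (Φ i) := by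
  constructor <;> by_contra! h <;> apply hz
  · refine coneOf_mono ?_
      (mem_coneOf_sep_of_map_eq_zero (-ξ) (fun i hi => by simpa using h i hi) hw (by simp [hμ]))
    rintro i ⟨hiJ, hi0⟩
    exact ⟨hiJ, by simpa using hi0⟩
  · exact coneOf_mono (fun i hi => hi)
      (mem_coneOf_sep_of_map_eq_zero ξ (fun i hi => by simpa using h i hi) hw hμ)

end Counting

section WallCrossing

variable {F : Type*} [NormedAddCommGroup F] [NormedSpace ℝ F] [FiniteDimensional ℝ F]
  {ι : Type*} [Fintype ι] [DecidableEq ι] {Φ : ι → F} {τ₁ τ₂ : Set F} {ξ : F →ₗ[ℝ] ℝ} {μ : F}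
  {A : Finset ι}

lemma sum_Icc_bgCoeff_flipSeq (hgen : Submodule.span ℝ (Set.range Φ) = ⊤) (hτ₂ : IsTope Φ τ₂)
    (h₂ : IsSideAt τ₂ (-ξ) μ) (hA : ∀ i, i ∈ A ↔ 0 < ξ (Φ i)) (J : Finset ι) :
    ∑ I ∈ Finset.Icc (J \ A) J, bgCoeff (flipSeq Φ A) τ₂ I =
      if μ ∈ coneOf Φ {i | i ∈ J ∧ ξ (Φ i) = 0} then
        (-1) ^ ((J \ A).card + Module.finrank ℝ F) *
          ((if J \ A = J then 1 else 0) - if ∃ i ∈ J, 0 < (-ξ) (Φ i) then 0 else 1)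
      else 0 := by
  have hμ : ξ μ = 0 := by simpa using h₂.map_eq_zero
  have hterm : ∀ I ∈ Finset.Icc (J \ A) J, bgCoeff (flipSeq Φ A) τ₂ I =
      if μ ∈ coneOf Φ {i | i ∈ J ∧ ξ (Φ i) = 0} then (-1) ^ Module.finrank ℝ F *
        ((-1) ^ I.card * if I ≠ J \ A ∨ ∃ i ∈ J, 0 < (-ξ) (Φ i) then 1 else 0)
      else 0 := by
    intro I hI
    rw [bgCoeff, h₂.mem_gens_iff hgen (flipSeq_eq_or_eq_neg Φ A) hτ₂,
      mem_coneOf_flipSeq_iff hA hμ hI, exists_flipSeq_neg_iff hA hI]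
    by_cases hz : μ ∈ coneOf Φ {i | i ∈ J ∧ ξ (Φ i) = 0} <;>
      by_cases hc : I ≠ J \ A ∨ ∃ i ∈ J, 0 < (-ξ) (Φ i) <;>
      simp only [hz, hc, and_true, and_false, if_true, if_false, one_mul, zero_mul, pow_add,
        mul_comm]
  rw [Finset.sum_congr rfl hterm]
  by_cases hz : μ ∈ coneOf Φ {i | i ∈ J ∧ ξ (Φ i) = 0}
  · simp only [hz, if_true]
    rw [← Finset.mul_sum, sum_Icc_neg_one_pow_card_mul_ite Finset.sdiff_subset, pow_add]
    ring
  · simp [hz]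

theorem bgCoeff_wall_crossing (hgen : Submodule.span ℝ (Set.range Φ) = ⊤) (hτ₁ : IsTope Φ τ₁)
    (hτ₂ : IsTope Φ τ₂) (h₁ : IsSideAt τ₁ ξ μ) (h₂ : IsSideAt τ₂ (-ξ) μ)
    (hA : ∀ i, i ∈ A ↔ 0 < ξ (Φ i)) (J : Finset ι) :
    bgCoeff Φ τ₁ J = bgCoeff Φ τ₂ J - (-1) ^ A.card *
      ((-1) ^ (A \ J).card * ∑ I ∈ Finset.Icc (J \ A) J, bgCoeff (flipSeq Φ A) τ₂ I) := by
  have hΦ : ∀ i, Φ i = Φ i ∨ Φ i = -Φ i := fun _ => Or.inl rfl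
  have hzw : μ ∈ coneOf Φ {i | i ∈ J ∧ ξ (Φ i) = 0} → μ ∈ coneOf Φ ↑J :=
    fun h => coneOf_mono (fun i hi => hi.1) h
  have hwz := exists_pos_and_exists_neg_of_mem_coneOf (Φ := Φ) (J := J) h₁.map_eq_zero
  have hp : J \ A = J ↔ ¬∃ i ∈ J, 0 < ξ (Φ i) := by
    simp [← hA, Finset.disjoint_left]
  have hsign : (-1 : ℤ) ^ J.card = (-1) ^ A.card * (-1) ^ (A \ J).card * (-1) ^ (J \ A).card := by
    have hsq : (-1 : ℤ) ^ (A \ J).card * (-1) ^ (A \ J).card = 1 := by rw [← mul_pow]; simp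
    rw [← Finset.card_sdiff_add_card_inter A J, ← Finset.card_sdiff_add_card_inter J A,
      Finset.inter_comm, pow_add, pow_add]
    linear_combination -((-1 : ℤ) ^ (J \ A).card * (-1) ^ (A ∩ J).card) * hsq
  rw [sum_Icc_bgCoeff_flipSeq hgen hτ₂ h₂ hA, bgCoeff, bgCoeff, h₁.mem_gens_iff hgen hΦ hτ₁,
    h₂.mem_gens_iff hgen hΦ hτ₂, pow_add, pow_add, hsign]
  -- with `w := μ ∈ cone(Φ_J)`, `z := μ ∈ cone(Φ_J ∩ ker ξ)`, `p`/`m` := some `Φ_j` has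
  -- `ξ > 0`/`ξ < 0`, the three terms are `[w ∧ p]`, `[w ∧ m]`, `[z] ([¬p] - [¬m])`
  by_cases hz : μ ∈ coneOf Φ {i | i ∈ J ∧ ξ (Φ i) = 0}
  · have hw := hzw hz
    by_cases hpos : ∃ i ∈ J, 0 < ξ (Φ i) <;> by_cases hneg : ∃ i ∈ J, 0 < (-ξ) (Φ i) <;>
      simp only [hz, hw, hpos, hneg, hp, not_true_eq_false, not_false_eq_true, and_self, and_false,
        if_true, if_false] <;> ring
  · by_cases hw : μ ∈ coneOf Φ ↑J
    · obtain ⟨hpos, hneg⟩ := hwz hw hz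
      simp only [hz, hw, hpos, hneg, and_self, if_true, if_false]
      ring
    · simp only [hz, hw, false_and, if_false]
      ring

end WallCrossing

theorem combinatorial_wall_crossing_general
    {F : Type*} [NormedAddCommGroup F] [NormedSpace ℝ F] [FiniteDimensional ℝ F]
    {N : ℕ} (Φ : Fin N → F)
    (hgen : Submodule.span ℝ (Set.range Φ) = ⊤)
    (τ₁ τ₂ : Set F) (H : Submodule ℝ F) (hadj : Adjacent Φ τ₁ τ₂ H)
    (A : Finset (Fin N)) (hA : ∀ i, i ∈ A ↔ InOpenSideOf H τ₁ (Φ i)) :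
    BGpoly Φ τ₁ =
      BGpoly Φ τ₂ -
        (-1 : MvPolynomial (Fin N ⊕ Fin N) ℤ) ^ A.card *
          FlipPoly A (BGpoly (flipSeq Φ A) τ₂) := by
  obtain ⟨ξ, μ, rfl, h₁, h₂⟩ := hadj.exists_isSideAt
  have hAξ : ∀ i, i ∈ A ↔ 0 < ξ (Φ i) := fun i =>
    (hA i).trans (inOpenSideOf_ker_iff h₁.pos hadj.1.nonempty)
  rw [BGpoly_eq_sum, BGpoly_eq_sum, FlipPoly_BGpoly, Finset.mul_sum, ← Finset.sum_sub_distrib]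
  refine Finset.sum_congr rfl fun J _ => ?_
  rw [bgCoeff_wall_crossing hgen hadj.1 hadj.2.1 h₁ h₂ hAξ J]
  push_cast
  ring

/-- Combinatorial wall-crossing formula:
`X(Φ,τ₁) = X(Φ,τ₂) - (-1)^{|A|} Flip_A X(Φ_flip^A, τ₂)`. -/
theorem combinatorial_wall_crossing
    {F : Type*} [NormedAddCommGroup F] [NormedSpace ℝ F] [FiniteDimensional ℝ F]
    {N : ℕ} (Φ : Fin N → F)
    (hne : ∀ i, Φ i ≠ 0)
    (hgen : Submodule.span ℝ (Set.range Φ) = ⊤)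
    (hsal : ∃ a : F →ₗ[ℝ] ℝ, ∀ i, 0 < a (Φ i))
    (τ₁ τ₂ : Set F) (H : Submodule ℝ F) (hadj : Adjacent Φ τ₁ τ₂ H)
    (hτ₁c : τ₁ ⊆ fullCone Φ)
    (A : Finset (Fin N)) (hA : ∀ i, i ∈ A ↔ InOpenSideOf H τ₁ (Φ i)) :
    BGpoly Φ τ₁ =
      BGpoly Φ τ₂ -
        (-1 : MvPolynomial (Fin N ⊕ Fin N) ℤ) ^ A.card *
          FlipPoly A (BGpoly (flipSeq Φ A) τ₂) :=
  combinatorial_wall_crossing_general Φ hgen τ₁ τ₂ H hadj A hA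

end AC
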